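/- For all integers r ≥ 0 and ℓ ≥ 1, with q = r, n = 2(ℓ+1) + 2(3r+3) + 2, and d the shortest-path distances of the unweighted undirected graph G_{ℓ,r} on the complete undirected graph K_n (on node set V_{ℓ,r}), one has min_{x ∈ SP^int(K_n,s,t)} d·x ≥ 3ℓ − 2; that is, every Hamiltonian path of K_n from s to t has d-length at least 3ℓ − 2. -/

import Mathlib

open Finset

namespace TSPGap


/-! ### Lovász–Schrijver lift-and-project operators -/

/-- `cone(R) = {(λ, λx) : λ ≥ 0, x ∈ R}`, with the extra 0th coordinate first. -/
def lsCone {ι : Type*} (R : Set (ι → ℝ)) : Set (ℝ × (ι → ℝ)) :=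
  {p | ∃ c : ℝ, ∃ y ∈ R, 0 ≤ c ∧ p.1 = c ∧ p.2 = fun i => c * y i}

/-- `X` is a protection matrix witnessing `x ∈ N(R)`: it is symmetric, its 0th row and
diagonal both equal `(1, x)`, and each row `X_i` and difference `X_0 - X_i` lies in `cone(R)`. -/
def IsProtection {ι : Type*} (R : Set (ι → ℝ)) (x : ι → ℝ)
    (X : Option ι → Option ι → ℝ) : Prop :=
  (∀ i j, X i j = X j i) ∧
  X none none = 1 ∧
  (∀ i, X none (some i) = x i) ∧
  (∀ i, X (some i) (some i) = x i) ∧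
  (∀ i, (X (some i) none, fun j => X (some i) (some j)) ∈ lsCone R) ∧
  (∀ i, (X none none - X (some i) none,
         fun j => X none (some j) - X (some i) (some j)) ∈ lsCone R)

/-- The Lovász–Schrijver `N` operator. -/
def lsN {ι : Type*} (R : Set (ι → ℝ)) : Set (ι → ℝ) :=
  {x | ∃ X : Option ι → Option ι → ℝ, IsProtection R x X}

/-- The Lovász–Schrijver `N₊` operator (protection matrix additionally PSD). -/
def lsNplus {ι : Type*} [Fintype ι] (R : Set (ι → ℝ)) : Set (ι → ℝ) :=
  {x | ∃ X : Matrix (Option ι) (Option ι) ℝ, X.PosSemidef ∧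
        IsProtection R x (fun i j => X i j)}

/-! ### Directed graphs -/

variable {V : Type*} [DecidableEq V]

/-- The list of (directed) steps of a walk given by its list of vertices. -/
def dSteps (l : List V) : List (V × V) := l.zip l.tail

/-- The steps of a closed walk given by its list of vertices. -/
def cycSteps (l : List V) : List (V × V) := l.zip (l.rotate 1)

/-- `l` is a directed walk from `u` to `v` using edges of `E`. -/
def IsDWalk (E : Finset (V × V)) (u v : V) (l : List V) : Prop :=
  l.head? = some u ∧ l.getLast? = some v ∧ ∀ a ∈ dSteps l, a ∈ E

/-- Total weight of a walk. -/
def dWalkWeight (w : V × V → ℝ) (l : List V) : ℝ := ((dSteps l).map w).sum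

/-- Shortest-path distance from `u` to `v` in the weighted directed graph `(E, w)`. -/
noncomputable def dDist (E : Finset (V × V)) (w : V × V → ℝ) (u v : V) : ℝ :=
  sInf {c | ∃ l : List V, IsDWalk E u v l ∧ dWalkWeight w l = c}

/-- `x(δ⁺(S))`. -/
def outCut (E : Finset (V × V)) (x : ↥E → ℝ) (S : Finset V) : ℝ :=
  ∑ e ∈ E.attach.filter (fun e => e.val.1 ∈ S ∧ e.val.2 ∉ S), x e

/-- `x(δ⁻(S))`. -/
def inCut (E : Finset (V × V)) (x : ↥E → ℝ) (S : Finset V) : ℝ :=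
  ∑ e ∈ E.attach.filter (fun e => e.val.1 ∉ S ∧ e.val.2 ∈ S), x e

/-- `d · x = ∑_e d_e x_e` over the edge set `E`. -/
def dDot (E : Finset (V × V)) (d : V × V → ℝ) (x : ↥E → ℝ) : ℝ :=
  ∑ e ∈ E.attach, d e.val * x e

/-- The balanced asymmetric tour polytope of the directed graph with node set `VS`
and edge set `E`. -/
def ATbal (VS : Finset V) (E : Finset (V × V)) : Set (↥E → ℝ) :=
  {x | (∀ e, 0 ≤ x e ∧ x e ≤ 1) ∧
       (∀ S : Finset V, S ⊆ VS → S.Nonempty → S ≠ VS →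
          1 ≤ outCut E x S ∧ 1 ≤ inCut E x S) ∧
       (∀ v ∈ VS, outCut E x {v} = inCut E x {v})}

/-- Indicator vectors of Hamiltonian cycles (on node set `VS`) among edges `E`. -/
def hamCycleVecs (VS : Finset V) (E : Finset (V × V)) : Set (↥E → ℝ) :=
  {x | ∃ c : List V, 2 ≤ c.length ∧ c.Nodup ∧ c.toFinset = VS ∧
        (∀ a ∈ cycSteps c, a ∈ E) ∧
        ∀ e : ↥E, x e = if e.val ∈ cycSteps c then 1 else 0}

/-- Edge set of the complete directed graph on the node set `VS` (no self-loops). -/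
def dComplete (VS : Finset V) : Finset (V × V) := (VS ×ˢ VS).filter (fun e => e.1 ≠ e.2)

/-- Edge set of the complete directed graph on all of `V` (no self-loops). -/
def dCompleteAll (V : Type*) [Fintype V] [DecidableEq V] : Finset (V × V) :=
  Finset.univ.filter (fun e => e.1 ≠ e.2)

/-- Out-degree of `v` in edge set `E`. -/
def outDeg (E : Finset (V × V)) (v : V) : ℕ := (E.filter (fun e => e.1 = v)).card

/-- In-degree of `v` in edge set `E`. -/
def inDeg (E : Finset (V × V)) (v : V) : ℕ := (E.filter (fun e => e.2 = v)).card

/-- A frame for the edge `e = (u,v)`: a set `F ⊆ E \ {e}` consisting of an edge-simple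
path from `u` to `v` together with zero or more edge-simple cycles, all pairwise
edge-disjoint. -/
def IsFrame (E : Finset (V × V)) (e : V × V) (F : Finset (V × V)) : Prop :=
  F ⊆ E.erase e ∧
  ∃ (p : List V) (cs : List (List V)),
    p.head? = some e.1 ∧ p.getLast? = some e.2 ∧ (∀ a ∈ dSteps p, a ∈ E) ∧
    (∀ c ∈ cs, c ≠ [] ∧ ∀ a ∈ cycSteps c, a ∈ E) ∧
    (dSteps p ++ (cs.map cycSteps).flatten).Nodup ∧
    F = (dSteps p ++ (cs.map cycSteps).flatten).toFinset

/-- There exist two edge-disjoint directed (simple) paths from `u` to `v` in `E`. -/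
def TwoEdgeDisjointPaths (E : Finset (V × V)) (u v : V) : Prop :=
  ∃ p q : List V, p.Nodup ∧ q.Nodup ∧
    p.head? = some u ∧ p.getLast? = some v ∧
    q.head? = some u ∧ q.getLast? = some v ∧
    (∀ a ∈ dSteps p, a ∈ E) ∧ (∀ a ∈ dSteps q, a ∈ E) ∧
    (dSteps p).Disjoint (dSteps q)




/-! ### The Charikar–Goemans–Karloff graphs -/

/-- Vertex type housing the graph `G_{k,r}` (index `k = 0` is a dummy level). -/
def CGKV : ℕ → Type
  | 0 => PUnit
  | 1 => ℕ
  | k + 2 => (ℕ × CGKV (k + 1)) ⊕ Fin 2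

instance CGKV.decEq : (k : ℕ) → DecidableEq (CGKV k)
  | 0 => inferInstanceAs (DecidableEq PUnit)
  | 1 => inferInstanceAs (DecidableEq ℕ)
  | k + 2 =>
      letI : DecidableEq (CGKV (k + 1)) := CGKV.decEq (k + 1)
      inferInstanceAs (DecidableEq ((ℕ × CGKV (k + 1)) ⊕ Fin 2))

/-- The source of `G_{k,r}`. -/
def CGKsrc (r : ℕ) : (k : ℕ) → CGKV k
  | 0 => PUnit.unit
  | 1 => (0 : ℕ)
  | _ + 2 => Sum.inr 0

/-- The sink of `G_{k,r}`. -/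
def CGKsnk (r : ℕ) : (k : ℕ) → CGKV k
  | 0 => PUnit.unit
  | 1 => (r + 1 : ℕ)
  | _ + 2 => Sum.inr 1

/-- The node set of `G_{k,r}`. -/
def CGKVS (r : ℕ) : (k : ℕ) → Finset (CGKV k)
  | 0 => ∅
  | 1 => Finset.range (r + 2)
  | k + 2 =>
      ((Finset.range r) ×ˢ CGKVS r (k + 1)).image Sum.inl ∪ {Sum.inr 0, Sum.inr 1}

/-- The edge set of `G_{k,r}`: at level 1, two oppositely-directed paths of `r+1` edges
on the nodes `0, …, r+1`; at level `k+2`, the edges of the `r` copies of `G_{k+1,r}`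
together with a path from the source `s` through the copies' sources to the sink `t`,
and a path from `t` through the copies' sinks (in the opposite order) back to `s`. -/
def CGKE (r : ℕ) : (k : ℕ) → Finset (CGKV k × CGKV k)
  | 0 => ∅
  | 1 => (dSteps (List.range (r + 2))).toFinset ∪
         (dSteps (List.range (r + 2)).reverse).toFinset
  | k + 2 =>
      (Finset.range r).biUnion
        (fun j => (CGKE r (k + 1)).image (fun e => (Sum.inl (j, e.1), Sum.inl (j, e.2)))) ∪
      (dSteps (Sum.inr 0 ::
        ((List.range r).map (fun j => Sum.inl (j, CGKsrc r (k + 1)))) ++ [Sum.inr 1])).toFinset ∪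
      (dSteps (Sum.inr 1 ::
        (((List.range r).map (fun j => Sum.inl (j, CGKsnk r (k + 1)))).reverse) ++ [Sum.inr 0])).toFinset

/-- Edge weights of `G_{k,r}` (and of `L_{k,r}`): level-`ℓ` edges have weight `r^(ℓ-1)`. -/
def CGKw (r : ℕ) : (k : ℕ) → CGKV k × CGKV k → ℝ
  | 0, _ => 0
  | 1, _ => 1
  | k + 2, e =>
      match e with
      | (Sum.inl (j, u), Sum.inl (j', v)) =>
          if j = j' then CGKw r (k + 1) (u, v) else (r : ℝ) ^ (k + 1)
      | _ => (r : ℝ) ^ (k + 1)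

/-- `v₁`: the successor of `s` on the forward path of `G_{k,r}`. -/
def Lv1 (r : ℕ) : (k : ℕ) → CGKV k
  | 0 => PUnit.unit
  | 1 => (1 : ℕ)
  | k + 2 => Sum.inl (0, CGKsrc r (k + 1))

/-- `v₂`: the predecessor of `t` on the forward path of `G_{k,r}`. -/
def Lv2 (r : ℕ) : (k : ℕ) → CGKV k
  | 0 => PUnit.unit
  | 1 => (r : ℕ)
  | k + 2 => Sum.inl (r - 1, CGKsrc r (k + 1))

/-- `v₃`: the successor of `t` on the backward path of `G_{k,r}`. -/
def Lv3 (r : ℕ) : (k : ℕ) → CGKV k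
  | 0 => PUnit.unit
  | 1 => (r : ℕ)
  | k + 2 => Sum.inl (r - 1, CGKsnk r (k + 1))

/-- `v₄`: the predecessor of `s` on the backward path of `G_{k,r}`. -/
def Lv4 (r : ℕ) : (k : ℕ) → CGKV k
  | 0 => PUnit.unit
  | 1 => (1 : ℕ)
  | k + 2 => Sum.inl (0, CGKsnk r (k + 1))

/-- The node set `V_{k,r}` of `L_{k,r}`: the nodes of `G_{k,r}` minus the two terminals. -/
def LVS (r k : ℕ) : Finset (CGKV k) :=
  ((CGKVS r k).erase (CGKsrc r k)).erase (CGKsnk r k)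

/-- The edge set `E_{k,r}` of `L_{k,r}`: the edges of `G_{k,r}` not incident to a terminal,
plus the two new edges `(v₂,v₁)` and `(v₄,v₃)`. -/
def LE (r k : ℕ) : Finset (CGKV k × CGKV k) :=
  (CGKE r k).filter (fun e =>
    e.1 ≠ CGKsrc r k ∧ e.1 ≠ CGKsnk r k ∧ e.2 ≠ CGKsrc r k ∧ e.2 ≠ CGKsnk r k) ∪
  {(Lv2 r k, Lv1 r k), (Lv4 r k, Lv3 r k)}



/-! ### Undirected graphs -/

variable {V : Type*} [DecidableEq V]

/-- The (undirected) steps of a walk given by its list of vertices. -/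
def uSteps (l : List V) : List (Sym2 V) := (l.zip l.tail).map (fun p => Sym2.mk p.1 p.2)

/-- `l` is a walk from `u` to `v` in the undirected edge set `E`. -/
def IsUWalk (E : Finset (Sym2 V)) (u v : V) (l : List V) : Prop :=
  l.head? = some u ∧ l.getLast? = some v ∧ ∀ e ∈ uSteps l, e ∈ E

/-- Whether the undirected edge `e` crosses the cut `(S, S̄)`. -/
def uCrosses (S : Finset V) (e : Sym2 V) : Bool :=
  Sym2.lift ⟨fun a b => xor (decide (a ∈ S)) (decide (b ∈ S)),
    fun a b => Bool.xor_comm _ _⟩ e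

/-- `x(δ(S))`. -/
def uCut (E : Finset (Sym2 V)) (x : ↥E → ℝ) (S : Finset V) : ℝ :=
  ∑ e ∈ E.attach.filter (fun e => uCrosses S e.val), x e

/-- `d · x = ∑_e d_e x_e` over the undirected edge set `E`. -/
def uDot (E : Finset (Sym2 V)) (d : Sym2 V → ℝ) (x : ↥E → ℝ) : ℝ :=
  ∑ e ∈ E.attach, d e.val * x e

/-- The symmetric tour polytope of the undirected graph with node set `VS`, edges `E`. -/
def STpoly (VS : Finset V) (E : Finset (Sym2 V)) : Set (↥E → ℝ) :=
  {x | (∀ e, 0 ≤ x e ∧ x e ≤ 1) ∧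
       (∀ S : Finset V, S ⊆ VS → S.Nonempty → S ≠ VS → 2 ≤ uCut E x S) ∧
       (∀ v ∈ VS, uCut E x {v} = 2)}

/-- The symmetric path polytope of the undirected graph with node set `VS`, edges `E`,
and endpoints `s`, `t`. -/
def SPpoly (VS : Finset V) (E : Finset (Sym2 V)) (s t : V) : Set (↥E → ℝ) :=
  {x | (∀ e, 0 ≤ x e ∧ x e ≤ 1) ∧
       (∀ S : Finset V, S ⊆ VS → S.Nonempty → S ≠ VS →
          (((s ∈ S) ↔ (t ∈ S)) → 2 ≤ uCut E x S) ∧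
          (¬((s ∈ S) ↔ (t ∈ S)) → 1 ≤ uCut E x S)) ∧
       (∀ v ∈ VS, v ≠ s → v ≠ t → uCut E x {v} = 2) ∧
       uCut E x {s} = 1 ∧ uCut E x {t} = 1}

/-- Indicator vectors of Hamiltonian paths from `s` to `t` (on node set `VS`) among
edges `E`. -/
def uHamPathVecs (VS : Finset V) (E : Finset (Sym2 V)) (s t : V) : Set (↥E → ℝ) :=
  {x | ∃ p : List V, p.Nodup ∧ p.toFinset = VS ∧
        p.head? = some s ∧ p.getLast? = some t ∧
        (∀ e ∈ uSteps p, e ∈ E) ∧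
        ∀ e : ↥E, x e = if e.val ∈ uSteps p then 1 else 0}

/-- Edge set of the complete undirected graph on all of `V` (no self-loops). -/
def uCompleteAll (V : Type*) [Fintype V] [DecidableEq V] : Finset (Sym2 V) :=
  Finset.univ.filter (fun e => ¬ e.IsDiag)

/-- Shortest-path distance (number of edges) between the endpoints of `e`, in the
unweighted undirected graph with edge set `E`. -/
noncomputable def uDist (E : Finset (Sym2 V)) (e : Sym2 V) : ℝ :=
  sInf {c | ∃ u v : V, e = s(u, v) ∧
    ∃ l : List V, IsUWalk E u v l ∧ ((uSteps l).length : ℝ) = c}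

/-! ### Cheung's graphs -/

/-- The node set `V_{ℓ,q}` of Cheung's graph `G_{ℓ,q}`: a top path and a bottom path of
`ℓ+1` nodes each, a left and a right clique of `3q+3` nodes each, and nodes `s`, `t`. -/
inductive ChV (l q : ℕ) where
  | top : Fin (l + 1) → ChV l q
  | bot : Fin (l + 1) → ChV l q
  | left : Fin (3 * q + 3) → ChV l q
  | right : Fin (3 * q + 3) → ChV l q
  | vs : ChV l q
  | vt : ChV l q
deriving DecidableEq, Fintype

/-- The edges of the two paths of `G_{ℓ,q}`. -/
def ChEpaths (l q : ℕ) : Finset (Sym2 (ChV l q)) :=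
  (Finset.univ : Finset (Fin l)).image
    (fun i => s(ChV.top i.castSucc, ChV.top i.succ)) ∪
  (Finset.univ : Finset (Fin l)).image
    (fun i => s(ChV.bot i.castSucc, ChV.bot i.succ))

/-- The edges within the two cliques of `G_{ℓ,q}`. -/
def ChEcliques (l q : ℕ) : Finset (Sym2 (ChV l q)) :=
  ((Finset.univ : Finset (Fin (3 * q + 3) × Fin (3 * q + 3))).filter
      (fun p => p.1 ≠ p.2)).image (fun p => s(ChV.left p.1, ChV.left p.2)) ∪
  ((Finset.univ : Finset (Fin (3 * q + 3) × Fin (3 * q + 3))).filter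
      (fun p => p.1 ≠ p.2)).image (fun p => s(ChV.right p.1, ChV.right p.2))

/-- The connection edges of `G_{ℓ,q}`: path endpoints to the cliques, `s` to the left
clique, and `t` to the right clique. -/
def ChEconn (l q : ℕ) : Finset (Sym2 (ChV l q)) :=
  (Finset.univ : Finset (Fin (3 * q + 3))).image (fun i => s(ChV.top 0, ChV.left i)) ∪
  (Finset.univ : Finset (Fin (3 * q + 3))).image (fun i => s(ChV.bot 0, ChV.left i)) ∪
  (Finset.univ : Finset (Fin (3 * q + 3))).image
    (fun i => s(ChV.top (Fin.last l), ChV.right i)) ∪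
  (Finset.univ : Finset (Fin (3 * q + 3))).image
    (fun i => s(ChV.bot (Fin.last l), ChV.right i)) ∪
  (Finset.univ : Finset (Fin (3 * q + 3))).image (fun i => s(ChV.vs, ChV.left i)) ∪
  (Finset.univ : Finset (Fin (3 * q + 3))).image (fun i => s(ChV.vt, ChV.right i))

/-- The edge set `E_{ℓ,q}` of Cheung's graph `G_{ℓ,q}`. -/
def ChE (l q : ℕ) : Finset (Sym2 (ChV l q)) :=
  ChEpaths l q ∪ ChEcliques l q ∪ ChEconn l q

/-- The node set of `G'_{ℓ,q}`: `G_{ℓ,q}` plus `ℓ-1` new internal path nodes. -/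
inductive ChV' (l q : ℕ) where
  | old : ChV l q → ChV' l q
  | mid : Fin (l - 1) → ChV' l q
deriving DecidableEq, Fintype

/-- The new `s`–`t` path of `G'_{ℓ,q}` (as a list of nodes; it has `ℓ` edges). -/
def ChPathList (l q : ℕ) : List (ChV' l q) :=
  ChV'.old ChV.vs :: ((List.finRange (l - 1)).map ChV'.mid ++ [ChV'.old ChV.vt])

/-- The edge set `E'_{ℓ,q}` of `G'_{ℓ,q}`: the (old) edges of `G_{ℓ,q}` together with the
`ℓ` new edges of a path from `s` to `t` through `ℓ-1` new nodes. -/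
def ChE' (l q : ℕ) : Finset (Sym2 (ChV' l q)) :=
  (ChE l q).image (Sym2.map ChV'.old) ∪ (uSteps (ChPathList l q)).toFinset

end TSPGap

/-!
Place the nodes of `G_{ℓ,q}` on a cycle of length `2ℓ + 4`: `s` and the left clique at `0`, the
top path at `1, …, ℓ + 1`, `t` and the right clique at `ℓ + 2`, the bottom path backwards at
`ℓ + 3, …, 2ℓ + 3`. Each of the `ℓ + 2` half-cycle arcs `{a + 1, …, a + ℓ + 2}`, `a ≤ ℓ + 1`,
contains `t` but not `s`, and every edge of `G_{ℓ,q}` crosses at most one of them, so `d(u, v)`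
is at least the number of arcs separating `u` and `v`. Hence the `d`-length of a Hamiltonian
`s`–`t` path is at least its total number of arc crossings. It crosses every arc an odd number of
times, and at most one arc exactly once: crossing arcs `a < b` once each would force it to visit
the top node `a` both after and before the bottom node `ℓ - a`. So `d · x ≥ 3(ℓ + 2) - 2`.
-/

namespace TSPGap

def flipCount : List Bool → ℕ
  | [] => 0
  | [_] => 0
  | a :: b :: L => (if a = b then 0 else 1) + flipCount (b :: L)

theorem flipCount_mod_two : ∀ {L : List Bool} {x z : Bool},
    L.head? = some x → L.getLast? = some z → flipCount L % 2 = if x = z then 0 else 1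
  | [], _, _, hx, _ => by simp at hx
  | [a], x, z, hx, hz => by simp_all [flipCount]
  | a :: b :: L, x, z, hx, hz => by
      obtain rfl : a = x := by simpa using hx
      have ih := flipCount_mod_two (L := b :: L) rfl (by simpa [List.getLast?_cons_cons] using hz)
      simp only [flipCount]
      cases a <;> cases b <;> cases z <;> simp at ih ⊢ <;> omega

theorem eq_of_mem_of_flipCount_eq_zero : ∀ {b : Bool} {L : List Bool},
    flipCount (b :: L) = 0 → ∀ y ∈ L, y = b
  | _, [], _, _, hy => by simp at hy
  | b, c :: L, h, y, hy => by
      simp only [flipCount, Nat.add_eq_zero_iff, ite_eq_left_iff, one_ne_zero, imp_false,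
        not_not] at h
      obtain ⟨rfl, h⟩ := h
      rcases List.mem_cons.mp hy with rfl | hy
      · rfl
      · exact eq_of_mem_of_flipCount_eq_zero h y hy

theorem pairwise_le_of_flipCount_le_one : ∀ {L : List Bool},
    L.head? = some false → flipCount L ≤ 1 → L.Pairwise (· ≤ ·)
  | [], _, _ => .nil
  | [_], _, _ => List.pairwise_singleton _ _
  | false :: false :: L, _, h =>
      .cons (fun _ _ => Bool.false_le _)
        (pairwise_le_of_flipCount_le_one rfl (by simpa [flipCount] using h))
  | false :: true :: L, _, h => by
      have htrue : ∀ y ∈ true :: L, y = true := by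
        simpa using eq_of_mem_of_flipCount_eq_zero (b := true) (by simpa [flipCount] using h)
      refine .cons (fun _ _ => Bool.false_le _) (List.pairwise_of_forall_mem_list ?_)
      intro y hy z hz
      rw [htrue y hy, htrue z hz]
  | true :: _, hx, _ => by simp at hx

theorem _root_.List.Pairwise.rel_or_rel_of_ne {α : Type*} {R : α → α → Prop} :
    ∀ {L : List α}, L.Pairwise R → ∀ {u v : α}, u ∈ L → v ∈ L → u ≠ v → R u v ∨ R v u
  | [], _, _, _, hu, _, _ => by simp at hu
  | x :: L, h, u, v, hu, hv, huv => by
      rw [List.pairwise_cons] at h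
      rw [List.mem_cons] at hu hv
      rcases hu with rfl | hu <;> rcases hv with rfl | hv
      · exact absurd rfl huv
      · exact .inl (h.1 v hv)
      · exact .inr (h.1 u hu)
      · exact h.2.rel_or_rel_of_ne hu hv huv

theorem three_mul_card_le_sum_add_two {ι : Type*} (I : Finset ι) (f : ι → ℕ)
    (hodd : ∀ a ∈ I, Odd (f a)) (hone : ∀ a ∈ I, ∀ b ∈ I, f a ≤ 1 → f b ≤ 1 → a = b) :
    3 * #I ≤ ∑ a ∈ I, f a + 2 := by
  have hsmall : #{a ∈ I | f a ≤ 1} ≤ 1 :=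
    card_le_one.mpr fun a ha b hb => by
      simp only [mem_filter] at ha hb
      exact hone a ha.1 b hb.1 ha.2 hb.2
  have hpoint : ∀ a ∈ I, 3 ≤ f a + if f a ≤ 1 then 2 else 0 := by
    intro a ha
    obtain ⟨k, hk⟩ := hodd a ha
    split_ifs <;> omega
  calc 3 * #I ≤ ∑ a ∈ I, (f a + if f a ≤ 1 then 2 else 0) := by
        simpa [mul_comm] using card_nsmul_le_sum I _ 3 hpoint
    _ = ∑ a ∈ I, f a + 2 * #{a ∈ I | f a ≤ 1} := by
        rw [sum_add_distrib, sum_ite, sum_const_zero, sum_const, smul_eq_mul, add_zero, mul_comm]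
    _ ≤ ∑ a ∈ I, f a + 2 := by omega

section Walks

variable {V : Type*}

theorem uSteps_cons_cons (a b : V) (L : List V) :
    uSteps (a :: b :: L) = s(a, b) :: uSteps (b :: L) := rfl

theorem mem_of_mem_uSteps {P : List V} {e : Sym2 V} (he : e ∈ uSteps P) {v : V} (hv : v ∈ e) :
    v ∈ P := by
  obtain ⟨⟨a, b⟩, hab, rfl⟩ := List.mem_map.mp he
  obtain ⟨ha, hb⟩ := List.of_mem_zip hab
  rcases Sym2.mem_iff.mp hv with rfl | rfl
  · exact ha
  · exact List.mem_of_mem_tail hb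

theorem nodup_uSteps : ∀ {P : List V}, P.Nodup → (uSteps P).Nodup
  | [], _ => List.nodup_nil
  | [_], _ => List.nodup_nil
  | a :: b :: L, h => by
      rw [List.nodup_cons] at h
      rw [uSteps_cons_cons, List.nodup_cons]
      exact ⟨fun hmem => h.1 (mem_of_mem_uSteps hmem (Sym2.mem_mk_left a b)), nodup_uSteps h.2⟩

theorem uDot_eq_sum_uSteps [DecidableEq V] {E : Finset (Sym2 V)} {d : Sym2 V → ℝ}
    {x : ↥E → ℝ} {P : List V} (hP : P.Nodup) (hPE : ∀ e ∈ uSteps P, e ∈ E)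
    (hx : ∀ e : ↥E, x e = if e.val ∈ uSteps P then 1 else 0) :
    uDot E d x = ((uSteps P).map d).sum := by
  have hsteps : E.filter (· ∈ uSteps P) = (uSteps P).toFinset := by
    ext e
    simpa using hPE e
  calc uDot E d x = ∑ e ∈ E, if e ∈ uSteps P then d e else 0 := by
        rw [uDot, ← sum_attach E]
        refine sum_congr rfl fun e _ => ?_
        rw [hx e, mul_ite, mul_one, mul_zero]
    _ = ((uSteps P).map d).sum := by
        rw [← sum_filter, hsteps, List.sum_toFinset _ (nodup_uSteps hP)]

theorem uSteps_support {G : SimpleGraph V} {u v : V} (p : G.Walk u v) :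
    uSteps p.support = p.edges := by
  induction p with
  | nil => rfl
  | cons _ p ih =>
      rw [SimpleGraph.Walk.support_cons, ← p.cons_tail_support, uSteps_cons_cons,
        p.cons_tail_support, ih, SimpleGraph.Walk.edges_cons]

theorem exists_isUWalk_of_reachable {E : Finset (Sym2 V)} {u v : V}
    (h : (SimpleGraph.fromEdgeSet (E : Set (Sym2 V))).Reachable u v) :
    ∃ L, IsUWalk E u v L := by
  obtain ⟨w⟩ := h
  refine ⟨w.support, by simp [List.head?_eq_some_head], by simp [List.getLast?_eq_some_getLast],
    fun e he => ?_⟩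
  rw [uSteps_support] at he
  have := w.edges_subset_edgeSet he
  rw [SimpleGraph.edgeSet_fromEdgeSet] at this
  exact this.1

end Walks

section Cuts

variable {V ι : Type*} (I : Finset ι) (c : ι → V → Bool)

def cutDist (u v : V) : ℕ := #{a ∈ I | c a u ≠ c a v}

theorem cutDist_comm (u v : V) : cutDist I c u v = cutDist I c v u := by
  simp only [cutDist, ne_comm]

theorem sum_cutDist_zip_tail : ∀ L : List V,
    ((L.zip L.tail).map fun p => cutDist I c p.1 p.2).sum = ∑ a ∈ I, flipCount (L.map (c a))
  | [] => by simp [flipCount]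
  | [_] => by simp [flipCount]
  | u :: v :: L => by
      have ih := sum_cutDist_zip_tail (v :: L)
      simp only [List.tail_cons, List.zip_cons_cons, List.map_cons, List.sum_cons] at ih ⊢
      rw [ih, cutDist, card_filter, ← sum_add_distrib]
      refine sum_congr rfl fun a _ => ?_
      simp only [flipCount, ite_not]

theorem cutDist_le_sum_flipCount {L : List V} {u v : V} (hu : L.head? = some u)
    (hv : L.getLast? = some v) : cutDist I c u v ≤ ∑ a ∈ I, flipCount (L.map (c a)) := by
  rw [cutDist, card_filter]
  refine sum_le_sum fun a _ => ?_
  have hpar := flipCount_mod_two (L := L.map (c a)) (x := c a u) (z := c a v)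
    (by simp [hu]) (by simp [hv])
  split_ifs at hpar ⊢ <;> omega

variable {I c} {E : Finset (Sym2 V)}

theorem cutDist_le_length_uSteps (hE : ∀ u v, s(u, v) ∈ E → cutDist I c u v ≤ 1) {u v : V}
    {L : List V} (hL : IsUWalk E u v L) : cutDist I c u v ≤ (uSteps L).length := by
  obtain ⟨hu, hv, hLE⟩ := hL
  calc cutDist I c u v ≤ ((L.zip L.tail).map fun p => cutDist I c p.1 p.2).sum := by
        rw [sum_cutDist_zip_tail]; exact cutDist_le_sum_flipCount I c hu hv
    _ ≤ ((L.zip L.tail).map fun p => cutDist I c p.1 p.2).length • 1 := by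
        refine List.sum_le_card_nsmul _ 1 fun n hn => ?_
        obtain ⟨⟨a, b⟩, hab, rfl⟩ := List.mem_map.mp hn
        exact hE a b (hLE _ (List.mem_map_of_mem hab))
    _ = (uSteps L).length := by simp [uSteps]

theorem cutDist_le_uDist (hE : ∀ u v, s(u, v) ∈ E → cutDist I c u v ≤ 1) {u v : V}
    (hconn : ∃ L, IsUWalk E u v L) : (cutDist I c u v : ℝ) ≤ uDist E s(u, v) := by
  obtain ⟨L, hL⟩ := hconn
  refine le_csInf ⟨_, u, v, rfl, L, hL, rfl⟩ ?_
  rintro _ ⟨u', v', huv, L', hL', rfl⟩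
  rcases Sym2.eq_iff.mp huv with ⟨rfl, rfl⟩ | ⟨rfl, rfl⟩
  · exact_mod_cast cutDist_le_length_uSteps hE hL'
  · rw [cutDist_comm]
    exact_mod_cast cutDist_le_length_uSteps hE hL'

theorem sum_flipCount_le_uDot [DecidableEq V] (hE : ∀ u v, s(u, v) ∈ E → cutDist I c u v ≤ 1)
    (hconn : ∀ u v, ∃ L, IsUWalk E u v L) {K : Finset (Sym2 V)} {x : ↥K → ℝ} {P : List V}
    (hP : P.Nodup) (hPK : ∀ e ∈ uSteps P, e ∈ K)
    (hx : ∀ e : ↥K, x e = if e.val ∈ uSteps P then 1 else 0) :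
    ((∑ a ∈ I, flipCount (P.map (c a)) : ℕ) : ℝ) ≤ uDot K (uDist E) x := by
  rw [uDot_eq_sum_uSteps hP hPK hx, ← sum_cutDist_zip_tail, Nat.cast_list_sum, uSteps,
    List.map_map, List.map_map]
  exact List.sum_le_sum fun p _ => cutDist_le_uDist hE (hconn p.1 p.2)

end Cuts

section Cheung

variable {l q : ℕ}

def chPos : ChV l q → ℕ
  | .top i => i + 1
  | .bot i => 2 * l + 3 - i
  | .left _ | .vs => 0
  | .right _ | .vt => l + 2

def chCut (a : ℕ) (v : ChV l q) : Bool := decide (a + 1 ≤ chPos v ∧ chPos v ≤ a + l + 2)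

theorem cutDist_chCut_le_one {u v : ChV l q} (h : s(u, v) ∈ ChE l q) :
    cutDist (range (l + 2)) chCut u v ≤ 1 := by
  refine card_le_one.mpr fun a ha b hb => ?_
  simp only [mem_filter, mem_range, chCut, ne_eq, decide_eq_decide] at ha hb
  simp only [ChE, ChEpaths, ChEcliques, ChEconn, mem_union, mem_image, mem_filter, mem_univ,
    true_and, Sym2.eq_iff] at h
  rcases h with ((⟨i, hi⟩ | ⟨i, hi⟩) | (⟨p, -, hi⟩ | ⟨p, -, hi⟩)) |
    (((((⟨i, hi⟩ | ⟨i, hi⟩) | ⟨i, hi⟩) | ⟨i, hi⟩) | ⟨i, hi⟩) | ⟨i, hi⟩) <;>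
  rcases hi with ⟨rfl, rfl⟩ | ⟨rfl, rfl⟩ <;>
  simp [chPos] at ha hb <;> omega

theorem reachable_ChE (u v : ChV l q) :
    (SimpleGraph.fromEdgeSet (ChE l q : Set (Sym2 (ChV l q)))).Reachable u v := by
  set G := SimpleGraph.fromEdgeSet (ChE l q : Set (Sym2 (ChV l q)))
  have adj {a b : ChV l q} (h : s(a, b) ∈ ChE l q) (hne : a ≠ b) : G.Reachable a b :=
    ((SimpleGraph.fromEdgeSet_adj _).mpr ⟨h, hne⟩).reachable
  have top (i : Fin (l + 1)) : G.Reachable (.top i) (.left 0) := by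
    induction i using Fin.induction with
    | zero => exact adj (by simp [ChE, ChEconn]) (by simp)
    | succ i ih =>
        exact (adj (by simp [ChE, ChEpaths, Sym2.eq_swap]) (by simp [Fin.ext_iff])).trans ih
  have bot (i : Fin (l + 1)) : G.Reachable (.bot i) (.left 0) := by
    induction i using Fin.induction with
    | zero => exact adj (by simp [ChE, ChEconn]) (by simp)
    | succ i ih =>
        exact (adj (by simp [ChE, ChEpaths, Sym2.eq_swap]) (by simp [Fin.ext_iff])).trans ih
  have right (i : Fin (3 * q + 3)) : G.Reachable (.right i) (.left 0) :=
    (adj (b := .top (Fin.last l)) (by simp [ChE, ChEconn, Sym2.eq_swap]) (by simp)).trans (top _)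
  have toLeft : ∀ v, G.Reachable v (.left 0) := by
    rintro (i | i | i | i | _ | _)
    · exact top i
    · exact bot i
    · by_cases hi : i = 0
      · rw [hi]
      · refine adj ?_ (by simpa using hi)
        simp only [ChE, ChEcliques, mem_union, mem_image, mem_filter, mem_univ, true_and]
        exact .inl (.inr (.inl ⟨(i, 0), hi, rfl⟩))
    · exact right i
    · exact adj (by simp [ChE, ChEconn]) (by simp)
    · exact (adj (b := .right 0) (by simp [ChE, ChEconn]) (by simp)).trans (right 0)
  exact (toLeft u).trans (toLeft v).symm

theorem eq_of_flipCount_map_chCut_le_one {P : List (ChV l q)} (hP : ∀ v, v ∈ P)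
    (hs : P.head? = some .vs) {a b : ℕ} (ha : a < l + 2) (hb : b < l + 2)
    (hfa : flipCount (P.map (chCut a)) ≤ 1) (hfb : flipCount (P.map (chCut b)) ≤ 1) : a = b := by
  have mono (k : ℕ) (hk : flipCount (P.map (chCut k)) ≤ 1) :
      P.Pairwise fun u v => chCut k u ≤ chCut k v :=
    List.pairwise_map.mp (pairwise_le_of_flipCount_le_one (by simp [hs, chCut, chPos]) hk)
  -- top node `i` lies in arc `i` but not in arc `j`, bottom node `l - i` the other way round
  have key (i j : ℕ) (hij : i < j) (hj : j < l + 2) (hfi : flipCount (P.map (chCut i)) ≤ 1)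
      (hfj : flipCount (P.map (chCut j)) ≤ 1) : False := by
    have := ((mono i hfi).and (mono j hfj)).rel_or_rel_of_ne
      (hP (.top ⟨i, by omega⟩)) (hP (.bot ⟨l - i, by omega⟩)) (by simp)
    simp [chCut, chPos, Bool.le_iff_imp] at this
    omega
  rcases lt_trichotomy a b with h | h | h
  · exact (key a b h hb hfa hfb).elim
  · exact h
  · exact (key b a h ha hfb hfa).elim

theorem three_mul_le_sum_flipCount_map_chCut_add_two {P : List (ChV l q)} (hP : ∀ v, v ∈ P)
    (hs : P.head? = some .vs) (ht : P.getLast? = some .vt) :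
    3 * (l + 2) ≤ ∑ a ∈ range (l + 2), flipCount (P.map (chCut a)) + 2 := by
  have hodd (a : ℕ) (ha : a ∈ range (l + 2)) : Odd (flipCount (P.map (chCut a))) := by
    have := flipCount_mod_two (L := P.map (chCut a)) (x := false) (z := true)
      (by simp [hs, chCut, chPos]) (by simp at ha; simp [ht, chCut, chPos]; omega)
    exact Nat.odd_iff.mpr (by simpa using this)
  simpa using three_mul_card_le_sum_add_two _ _ hodd fun a ha b hb =>
    eq_of_flipCount_map_chCut_le_one hP hs (mem_range.mp ha) (mem_range.mp hb)

end Cheung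

theorem stmt14_general (r l : ℕ)
    (x : ↥(uCompleteAll (ChV l r)) → ℝ)
    (hx : x ∈ uHamPathVecs Finset.univ (uCompleteAll (ChV l r)) ChV.vs ChV.vt) :
    3 * (l : ℝ) - 2 ≤ uDot (uCompleteAll (ChV l r)) (uDist (ChE l r)) x := by
  obtain ⟨P, hnd, hall, hs, ht, hPK, hxP⟩ := hx
  have hP (v : ChV l r) : v ∈ P := by simp [← List.mem_toFinset, hall]
  have hcount : (3 * (l + 2) : ℝ) ≤ ∑ a ∈ range (l + 2), flipCount (P.map (chCut a)) + 2 := by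
    exact_mod_cast three_mul_le_sum_flipCount_map_chCut_add_two hP hs ht
  have hdot := sum_flipCount_le_uDot (fun _ _ => cutDist_chCut_le_one)
    (fun u v => exists_isUWalk_of_reachable (reachable_ChE u v)) hnd hPK hxP
  linarith

theorem stmt14 (r l : ℕ) (hl : 1 ≤ l)
    (x : ↥(uCompleteAll (ChV l r)) → ℝ)
    (hx : x ∈ uHamPathVecs Finset.univ (uCompleteAll (ChV l r)) ChV.vs ChV.vt) :
    3 * (l : ℝ) - 2 ≤ uDot (uCompleteAll (ChV l r)) (uDist (ChE l r)) x :=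
  stmt14_general r l x hx

end TSPGap
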